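/- arXiv:1710.03373 — 3 statements merged into one kernel-verified Lean document; each statement's English description precedes it below -/
import Mathlib

section
/- Let t₀, t₁ ∈ ℂ with (t₀, t₁) ≠ (0, 0), and let F = t₀(X³ + Y³ + Z³) + 6t₁XYZ ∈ ℂ[X, Y, Z]. Then there exists a nonzero vector (x, y, z) ∈ ℂ³ at which all three partial derivatives ∂F/∂X, ∂F/∂Y, ∂F/∂Z vanish simultaneously if and only if t₀ = 0 or t₀³ + 8t₁³ = 0. (Equivalently, the member of the Hesse pencil over [t₀ : t₁] is a singular plane cubic exactly for the four parameter values [0 : 1] and [1 : a] with 1 + 8a³ = 0.) -/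
/-!
Multiplying the three critical equations `t₀x² = -2t₁yz`, `t₀y² = -2t₁xz`, `t₀z² = -2t₁xy`
gives `(t₀³ + 8t₁³)(xyz)² = 0`. If `xyz = 0` instead, then `t₀x³ = -2t₁xyz = 0` and likewise
for `y`, `z`, so for `t₀ ≠ 0` only the zero vector is critical. Conversely `(1, 0, 0)` is
critical when `t₀ = 0`, and `(1, 1, -t₀/(2t₁))` is critical when `t₀³ + 8t₁³ = 0`.
-/

open MvPolynomial

/-- The member of the Hesse pencil over parameter `(t₀, t₁)`:
`F = t₀(X³ + Y³ + Z³) + 6t₁XYZ` as a polynomial in `ℂ[X, Y, Z]`. -/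
noncomputable def hesseCubic (t₀ t₁ : ℂ) : MvPolynomial (Fin 3) ℂ :=
  C t₀ * (X 0 ^ 3 + X 1 ^ 3 + X 2 ^ 3) + C (6 * t₁) * (X 0 * X 1 * X 2)

section HesseGradient

variable {K : Type*} [Field K] {t₀ t₁ : K} {v : Fin 3 → K}

/-- A third of the gradient of `t₀(X³ + Y³ + Z³) + 6t₁XYZ` at `v`. -/
def hesseGradient (t₀ t₁ : K) (v : Fin 3 → K) : Fin 3 → K :=
  ![t₀ * v 0 ^ 2 + 2 * t₁ * v 1 * v 2,
    t₀ * v 1 ^ 2 + 2 * t₁ * v 0 * v 2,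
    t₀ * v 2 ^ 2 + 2 * t₁ * v 0 * v 1]

theorem hesseGradient_eq_zero_iff :
    hesseGradient t₀ t₁ v = 0 ↔
      t₀ * v 0 ^ 2 + 2 * t₁ * v 1 * v 2 = 0 ∧ t₀ * v 1 ^ 2 + 2 * t₁ * v 0 * v 2 = 0 ∧
        t₀ * v 2 ^ 2 + 2 * t₁ * v 0 * v 1 = 0 := by
  simp [hesseGradient, funext_iff, Fin.forall_fin_succ]

theorem discr_mul_sq_eq_zero_of_hesseGradient_eq_zero (h : hesseGradient t₀ t₁ v = 0) :
    (t₀ ^ 3 + 8 * t₁ ^ 3) * (v 0 * v 1 * v 2) ^ 2 = 0 := by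
  obtain ⟨h₀, h₁, h₂⟩ := hesseGradient_eq_zero_iff.mp h
  linear_combination (t₀ * v 1 ^ 2) * (t₀ * v 2 ^ 2) * h₀
    - (2 * t₁ * v 1 * v 2) * (t₀ * v 2 ^ 2) * h₁
    + (2 * t₁ * v 1 * v 2) * (2 * t₁ * v 0 * v 2) * h₂

theorem eq_zero_of_hesseGradient_eq_zero (h : hesseGradient t₀ t₁ v = 0) (ht₀ : t₀ ≠ 0)
    (hv : v 0 * v 1 * v 2 = 0) : v = 0 := by
  obtain ⟨h₀, h₁, h₂⟩ := hesseGradient_eq_zero_iff.mp h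
  have cube_eq_zero (a : K) (ha : t₀ * a ^ 3 = 0) : a = 0 :=
    pow_eq_zero_iff three_ne_zero |>.mp ((mul_eq_zero.mp ha).resolve_left ht₀)
  ext i
  fin_cases i
  · exact cube_eq_zero (v 0) (by linear_combination v 0 * h₀ - 2 * t₁ * hv)
  · exact cube_eq_zero (v 1) (by linear_combination v 1 * h₁ - 2 * t₁ * hv)
  · exact cube_eq_zero (v 2) (by linear_combination v 2 * h₂ - 2 * t₁ * hv)

theorem hesseGradient_zero_left (t₁ : K) : hesseGradient 0 t₁ ![1, 0, 0] = 0 := by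
  simp [hesseGradient_eq_zero_iff]

theorem hesseGradient_eq_zero_of_discr_eq_zero (h2 : (2 : K) ≠ 0) (ht₁ : t₁ ≠ 0)
    (h : t₀ ^ 3 + 8 * t₁ ^ 3 = 0) : hesseGradient t₀ t₁ ![1, 1, -t₀ / (2 * t₁)] = 0 := by
  simp only [hesseGradient_eq_zero_iff, Matrix.cons_val_zero, Matrix.cons_val_one,
    Matrix.cons_val_two, Matrix.tail_cons, Matrix.head_cons]
  refine ⟨?_, ?_, ?_⟩ <;> field_simp
  · ring
  · ring
  · linear_combination h

theorem exists_ne_zero_hesseGradient_eq_zero_iff (h2 : (2 : K) ≠ 0) :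
    (∃ v ≠ 0, hesseGradient t₀ t₁ v = 0) ↔ t₀ = 0 ∨ t₀ ^ 3 + 8 * t₁ ^ 3 = 0 := by
  constructor
  · rintro ⟨v, hv, h⟩
    refine or_iff_not_imp_left.mpr fun ht₀ => ?_
    have hxyz : v 0 * v 1 * v 2 ≠ 0 := fun hxyz =>
      hv (eq_zero_of_hesseGradient_eq_zero h ht₀ hxyz)
    exact (mul_eq_zero.mp (discr_mul_sq_eq_zero_of_hesseGradient_eq_zero h)).resolve_right
      (pow_ne_zero 2 hxyz)
  · intro h
    rcases eq_or_ne t₀ 0 with rfl | ht₀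
    · exact ⟨![1, 0, 0], fun h => by simpa using congrFun h 0, hesseGradient_zero_left t₁⟩
    · have hdisc := h.resolve_left ht₀
      have ht₁ : t₁ ≠ 0 := by
        rintro rfl
        exact ht₀ (pow_eq_zero_iff three_ne_zero |>.mp (by simpa using hdisc))
      exact ⟨_, fun h => by simpa using congrFun h 0,
        hesseGradient_eq_zero_of_discr_eq_zero h2 ht₁ hdisc⟩

end HesseGradient

theorem eval_pderiv_hesseCubic (t₀ t₁ : ℂ) (v : Fin 3 → ℂ) (i : Fin 3) :
    eval v (pderiv i (hesseCubic t₀ t₁)) = 3 * hesseGradient t₀ t₁ v i := by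
  fin_cases i <;> simp [hesseCubic, hesseGradient, pderiv_X] <;> ring

theorem hesseCubic_singular_iff_general (t₀ t₁ : ℂ) :
    (∃ v : Fin 3 → ℂ, v ≠ 0 ∧
        ∀ i : Fin 3, eval v (pderiv i (hesseCubic t₀ t₁)) = 0) ↔
      t₀ = 0 ∨ t₀ ^ 3 + 8 * t₁ ^ 3 = 0 := by
  have pderiv_eq_zero_iff (v : Fin 3 → ℂ) :
      (∀ i, eval v (pderiv i (hesseCubic t₀ t₁)) = 0) ↔ hesseGradient t₀ t₁ v = 0 := by
    simp [eval_pderiv_hesseCubic, funext_iff]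
  simp only [pderiv_eq_zero_iff]
  exact exists_ne_zero_hesseGradient_eq_zero_iff two_ne_zero

/-- For `(t₀, t₁) ≠ (0, 0)`, the cubic `F = t₀(X³ + Y³ + Z³) + 6t₁XYZ` has a nonzero
point of `ℂ³` where all three partial derivatives vanish simultaneously if and only
if `t₀ = 0` or `t₀³ + 8t₁³ = 0`; i.e. the member of the Hesse pencil over `[t₀ : t₁]`
is singular exactly for the parameters `[0 : 1]` and `[1 : a]` with `1 + 8a³ = 0`. -/
theorem hesseCubic_singular_iff (t₀ t₁ : ℂ) (h : (t₀, t₁) ≠ (0, 0)) :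
    (∃ v : Fin 3 → ℂ, v ≠ 0 ∧
        ∀ i : Fin 3, eval v (pderiv i (hesseCubic t₀ t₁)) = 0) ↔
      t₀ = 0 ∨ t₀ ^ 3 + 8 * t₁ ^ 3 = 0 :=
  hesseCubic_singular_iff_general t₀ t₁
end

section
/- Let a, b, e, f ∈ ℂ and a′, b′, e′, f′ ∈ ℂ be such that a, b, e, f, a′, b′, e′, f′ are all nonzero, af − 5be ≠ 0, 5af − 9be ≠ 0, a′f′ − 5b′e′ ≠ 0, and 5a′f′ − 9b′e′ ≠ 0. Suppose there exists λ ∈ ℂ, λ ≠ 0, such that each of the six coefficients of C₃,₅ at (a′, b′, e′, f′) equals λ times the corresponding coefficient at (a, b, e, f); that is, (a′f′ − 5b′e′)a′ = λ(af − 5be)a, (5a′f′ − 9b′e′)b′ = λ(5af − 9be)b, 8b′²f′ = λ·8b²f, −8a′e′² = λ·(−8ae²), (5a′f′ − 9b′e′)e′ = λ(5af − 9be)e, and −(a′f′ − 5b′e′)f′ = λ·(−(af − 5be)f). Then there exists μ ∈ ℂ, μ ≠ 0, with (a′, b′, e′, f′) = (μa, μb, μe, μf). (Hence the rational map ℙ³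 ⇢ ℙ⁵ defined by the covariant C₃,₅ in Hammond coordinates is of degree 1 onto its image.) -/
/-!
The pairs of coefficients at `t₀⁴t₁, t₀t₁⁴` and at `t₀⁵, t₁⁵` are proportional to `(b, e)` and
`(a, f)` with common factors `5af − 9be` and `af − 5be`; so `(b', e') = ν (b, e)` and
`(a', f') = α (a, f)`. The coefficient at `t₀²t₁³` then gives `λ = αν²`, the one at `t₀⁵` gives
`α² = ν²`, and the one at `t₀⁴t₁` rules out `α = −ν` because `5af − 9be ≠ 0`.
-/

theorem cross_mul_eq_of_proportional {R : Type*} [CommRing R] [NoZeroDivisors R]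
    {c c' l x y x' y' : R} (hc' : c' ≠ 0)
    (hx : c' * x' = l * (c * x)) (hy : c' * y' = l * (c * y)) :
    x' * y = y' * x :=
  mul_left_cancel₀ hc' (by linear_combination y * hx - x * hy)

theorem exists_eq_mul_of_proportional {K : Type*} [Field K]
    {c c' l x y x' y' : K} (hx : x ≠ 0) (hc' : c' ≠ 0)
    (hx' : c' * x' = l * (c * x)) (hy' : c' * y' = l * (c * y)) :
    ∃ ν, x' = ν * x ∧ y' = ν * y := by
  have hcross := cross_mul_eq_of_proportional hc' hx' hy'
  refine ⟨x' / x, (div_mul_cancel₀ x' hx).symm, ?_⟩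
  field_simp
  linear_combination -hcross

theorem ratio_eq_of_hammond_covariant_scaling {K : Type*} [Field K]
    {a b e f α ν l : K} (ha : a ≠ 0) (hb : b ≠ 0) (he : e ≠ 0) (hf : f ≠ 0)
    (hQ : 5 * a * f - 9 * b * e ≠ 0) (hl : l ≠ 0)
    (h5 : (α * a * (α * f) - 5 * (ν * b) * (ν * e)) * (α * a) = l * ((a * f - 5 * b * e) * a))
    (h4 : (5 * (α * a) * (α * f) - 9 * (ν * b) * (ν * e)) * (ν * b)
      = l * ((5 * a * f - 9 * b * e) * b))
    (h2 : α * a * (ν * e) ^ 2 = l * (a * e ^ 2)) :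
    α = ν := by
  have hl_eq : l = α * ν ^ 2 :=
    mul_right_cancel₀ (mul_ne_zero ha (pow_ne_zero 2 he)) (by linear_combination -h2)
  have hα : α ≠ 0 := left_ne_zero_of_mul (hl_eq ▸ hl)
  have hν : ν ≠ 0 := pow_ne_zero_iff two_ne_zero |>.mp (right_ne_zero_of_mul (hl_eq ▸ hl))
  have hsq : α ^ 2 = ν ^ 2 :=
    mul_right_cancel₀ (mul_ne_zero hα (mul_ne_zero (pow_ne_zero 2 ha) hf))
      (by linear_combination h5 + ((a * f - 5 * b * e) * a) * hl_eq)
  exact mul_right_cancel₀ (mul_ne_zero (pow_ne_zero 2 hν) (mul_ne_zero hb hQ))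
    (by linear_combination -h4 - ((5 * a * f - 9 * b * e) * b) * hl_eq + (5 * a * f * ν * b) * hsq)

theorem hammond_covariant_injective_general
    (a b e f a' b' e' f' : ℂ)
    (ha : a ≠ 0) (hb : b ≠ 0) (he : e ≠ 0) (hf : f ≠ 0)
    (h2 : 5 * a * f - 9 * b * e ≠ 0)
    (h1' : a' * f' - 5 * b' * e' ≠ 0) (h2' : 5 * a' * f' - 9 * b' * e' ≠ 0)
    (lam : ℂ) (hlam : lam ≠ 0)
    (hc5 : (a' * f' - 5 * b' * e') * a' = lam * ((a * f - 5 * b * e) * a))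
    (hc4 : (5 * a' * f' - 9 * b' * e') * b' = lam * ((5 * a * f - 9 * b * e) * b))
    (hc2 : -(8 * a' * e' ^ 2) = lam * (-(8 * a * e ^ 2)))
    (hc1 : (5 * a' * f' - 9 * b' * e') * e' = lam * ((5 * a * f - 9 * b * e) * e))
    (hc0 : -((a' * f' - 5 * b' * e') * f') = lam * (-((a * f - 5 * b * e) * f))) :
    ∃ μ : ℂ, μ ≠ 0 ∧ a' = μ * a ∧ b' = μ * b ∧ e' = μ * e ∧ f' = μ * f := by
  have hc0' : (a' * f' - 5 * b' * e') * f' = lam * ((a * f - 5 * b * e) * f) := by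
    linear_combination -hc0
  obtain ⟨α, rfl, rfl⟩ := exists_eq_mul_of_proportional ha h1' hc5 hc0'
  obtain ⟨ν, rfl, rfl⟩ := exists_eq_mul_of_proportional hb h2' hc4 hc1
  obtain rfl : α = ν := ratio_eq_of_hammond_covariant_scaling ha hb he hf h2 hlam hc5 hc4
    (by linear_combination -hc2 / 8)
  refine ⟨α, ?_, rfl, rfl, rfl, rfl⟩
  rintro rfl
  exact h1' (by ring)

/-- If two Hammond-form binary quintics with parameters `(a, b, e, f)` and
`(a′, b′, e′, f′)` (all coordinates nonzero and the quantities `af − 5be`,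
`5af − 9be`, `a′f′ − 5b′e′`, `5a′f′ − 9b′e′` nonzero) have proportional images
under the covariant `C₃,₅` (with ratio `λ ≠ 0` on all six coefficients), then
`(a′, b′, e′, f′)` is a nonzero scalar multiple of `(a, b, e, f)`. Hence the
rational map `ℙ³ ⇢ ℙ⁵` defined by `C₃,₅` in Hammond coordinates has degree 1
onto its image. -/
theorem hammond_covariant_injective
    (a b e f a' b' e' f' : ℂ)
    (ha : a ≠ 0) (hb : b ≠ 0) (he : e ≠ 0) (hf : f ≠ 0)
    (ha' : a' ≠ 0) (hb' : b' ≠ 0) (he' : e' ≠ 0) (hf' : f' ≠ 0)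
    (h1 : a * f - 5 * b * e ≠ 0) (h2 : 5 * a * f - 9 * b * e ≠ 0)
    (h1' : a' * f' - 5 * b' * e' ≠ 0) (h2' : 5 * a' * f' - 9 * b' * e' ≠ 0)
    (lam : ℂ) (hlam : lam ≠ 0)
    (hc5 : (a' * f' - 5 * b' * e') * a' = lam * ((a * f - 5 * b * e) * a))
    (hc4 : (5 * a' * f' - 9 * b' * e') * b' = lam * ((5 * a * f - 9 * b * e) * b))
    (hc3 : 8 * b' ^ 2 * f' = lam * (8 * b ^ 2 * f))
    (hc2 : -(8 * a' * e' ^ 2) = lam * (-(8 * a * e ^ 2)))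
    (hc1 : (5 * a' * f' - 9 * b' * e') * e' = lam * ((5 * a * f - 9 * b * e) * e))
    (hc0 : -((a' * f' - 5 * b' * e') * f') = lam * (-((a * f - 5 * b * e) * f))) :
    ∃ μ : ℂ, μ ≠ 0 ∧ a' = μ * a ∧ b' = μ * b ∧ e' = μ * e ∧ f' = μ * f :=
  hammond_covariant_injective_general a b e f a' b' e' f' ha hb he hf h2 h1' h2' lam hlam hc5 hc4
    hc2 hc1 hc0
end

section
/- Let a, b, c, d, e, f ∈ ℂ and define the six points of ℂ³: q₁ = (0, f, −b), q₂ = (0, −c, f), q₃ = (−c, 0, e), q₄ = (e, 0, −a), q₅ = (d, −a, 0), q₆ = (−b, d, 0). Then there exists a nonzero ternary quadratic form Q(x, y, z) = A x² + B y² + C z² + D xy + E xz + F yz (i.e. (A, B, C, D, E, F) ∈ ℂ⁶ not all zero) such that Q(qᵢ) = 0 for all i = 1, …, 6. That is, the six points lie on a common conic. -/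
/-!
On the side `x = 0` of the coordinate triangle the points `q₁, q₂` are the zeros of the binary
form `(b y + f z)(f y + c z)`; likewise `q₃, q₄` are the zeros of `(a x + e z)(e x + c z)` on
`y = 0` and `q₅, q₆` those of `(a x + d y)(d x + b y)` on `z = 0`. The squared terms of these
three forms are in the ratios `b : c`, `a : c`, `a : b`, so after scaling them by `d e`, `d f`,
`e f` they are the restrictions of a single ternary form, which is nonzero when `d e f ≠ 0`.
If instead `d = 0`, say, then `q₅` and `q₆` are vertices of the triangle and all six points
lie on the line pair `x y = 0`.
-/

namespace SixPointsOnConic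

variable {R : Type*} [CommRing R]

def quadForm (A B C D E F : R) (p : R × R × R) : R :=
  A * p.1 ^ 2 + B * p.2.1 ^ 2 + C * p.2.2 ^ 2
    + D * p.1 * p.2.1 + E * p.1 * p.2.2 + F * p.2.1 * p.2.2

def sixPoints (a b c d e f : R) : Set (R × R × R) :=
  {(0, f, -b), (0, -c, f), (-c, 0, e), (e, 0, -a), (d, -a, 0), (-b, d, 0)}

def conic (a b c d e f : R) : R × R × R → R :=
  quadForm (a * d * e * f) (b * d * e * f) (c * d * e * f)
    (e * f * (d ^ 2 + a * b)) (d * f * (e ^ 2 + a * c)) (d * e * (f ^ 2 + b * c))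

theorem conic_coeffs_ne_zero [NoZeroDivisors R] (a b c : R) {d e f : R}
    (hd : d ≠ 0) (he : e ≠ 0) (hf : f ≠ 0) :
    (a * d * e * f, b * d * e * f, c * d * e * f, e * f * (d ^ 2 + a * b),
      d * f * (e ^ 2 + a * c), d * e * (f ^ 2 + b * c)) ≠
        ((0, 0, 0, 0, 0, 0) : R × R × R × R × R × R) := by
  intro h
  simp only [Prod.mk.injEq] at h
  obtain ⟨ha, hb, -, hD, -, -⟩ := h
  simp only [mul_eq_zero, hd, he, hf, or_false] at ha hb
  simp [ha, hb, hd, he, hf] at hD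

variable (a b c d e f : R)

theorem conic_zero_fst (y z : R) :
    conic a b c d e f (0, y, z) = d * e * ((b * y + f * z) * (f * y + c * z)) := by
  simp only [conic, quadForm]; ring

theorem conic_zero_snd (x z : R) :
    conic a b c d e f (x, 0, z) = d * f * ((a * x + e * z) * (e * x + c * z)) := by
  simp only [conic, quadForm]; ring

theorem conic_zero_thd (x y : R) :
    conic a b c d e f (x, y, 0) = e * f * ((a * x + d * y) * (d * x + b * y)) := by
  simp only [conic, quadForm]; ring

theorem conic_eq_zero_of_mem_sixPoints {p : R × R × R} (hp : p ∈ sixPoints a b c d e f) :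
    conic a b c d e f p = 0 := by
  rcases hp with rfl | rfl | rfl | rfl | rfl | rfl <;>
    simp only [conic_zero_fst, conic_zero_snd, conic_zero_thd] <;> ring

theorem fst_mul_snd_eq_zero_of_mem_sixPoints {p : R × R × R} (hp : p ∈ sixPoints a b c 0 e f) :
    p.1 * p.2.1 = 0 := by
  rcases hp with rfl | rfl | rfl | rfl | rfl | rfl <;> simp

theorem fst_mul_thd_eq_zero_of_mem_sixPoints {p : R × R × R} (hp : p ∈ sixPoints a b c d 0 f) :
    p.1 * p.2.2 = 0 := by
  rcases hp with rfl | rfl | rfl | rfl | rfl | rfl <;> simp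

theorem snd_mul_thd_eq_zero_of_mem_sixPoints {p : R × R × R} (hp : p ∈ sixPoints a b c d e 0) :
    p.2.1 * p.2.2 = 0 := by
  rcases hp with rfl | rfl | rfl | rfl | rfl | rfl <;> simp

end SixPointsOnConic

/-- The six points `q₁ = (0, f, −b)`, `q₂ = (0, −c, f)`, `q₃ = (−c, 0, e)`,
`q₄ = (e, 0, −a)`, `q₅ = (d, −a, 0)`, `q₆ = (−b, d, 0)` of `ℂ³` lie on a common
conic: there is a nonzero ternary quadratic form
`Q(x, y, z) = Ax² + By² + Cz² + Dxy + Exz + Fyz` vanishing at all six points. -/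
theorem six_points_on_conic (a b c d e f : ℂ) :
    ∃ A B C D E F : ℂ, (A, B, C, D, E, F) ≠ (0, 0, 0, 0, 0, 0) ∧
      (∀ p ∈ ({(0, f, -b), (0, -c, f), (-c, 0, e),
                (e, 0, -a), (d, -a, 0), (-b, d, 0)} : Set (ℂ × ℂ × ℂ)),
        A * p.1 ^ 2 + B * p.2.1 ^ 2 + C * p.2.2 ^ 2
          + D * p.1 * p.2.1 + E * p.1 * p.2.2 + F * p.2.1 * p.2.2 = 0) := by
  open SixPointsOnConic in
  by_cases hd : d = 0
  · subst hd
    exact ⟨0, 0, 0, 1, 0, 0, by simp,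
      fun p hp => by simpa using fst_mul_snd_eq_zero_of_mem_sixPoints a b c e f hp⟩
  by_cases he : e = 0
  · subst he
    exact ⟨0, 0, 0, 0, 1, 0, by simp,
      fun p hp => by simpa using fst_mul_thd_eq_zero_of_mem_sixPoints a b c d f hp⟩
  by_cases hf : f = 0
  · subst hf
    exact ⟨0, 0, 0, 0, 0, 1, by simp,
      fun p hp => by simpa using snd_mul_thd_eq_zero_of_mem_sixPoints a b c d e hp⟩
  exact ⟨_, _, _, _, _, _, conic_coeffs_ne_zero a b c hd he hf,
    fun p hp => conic_eq_zero_of_mem_sixPoints a b c d e f hp⟩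
end
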